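/- The lowest Harer–Zagier coefficient has the closed form b(g, 0) = (4g)! / (8^g · g! · (2g+1)!!) for every integer g ≥ 1, where (2g+1)!! denotes the double factorial. -/
import Mathlib


/-- Closed form for the lowest Harer–Zagier coefficient:
`b g 0 = (4g)! / (8^g * g! * (2g+1)‼)` for every `g ≥ 1`. -/
theorem harer_zagier_lowest_coefficient
    (b : ℕ → ℤ → ℚ)
    (hb1 : b 1 0 = 1)
    (hb0 : ∀ g : ℕ, 1 ≤ g → ∀ k : ℤ, (k < 0 ∨ (g : ℤ) - 1 < k) → b g k = 0)
    (hrec : ∀ g : ℕ, 1 ≤ g → ∀ k : ℤ,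
      (4 * (g : ℚ) + 2 * (k : ℚ) + 6) * b (g + 1) k =
        (4 * (g : ℚ) + 2 * (k : ℚ) + 1) * (4 * (g : ℚ) + 2 * (k : ℚ) + 3) *
          ((4 * (g : ℚ) + 2 * (k : ℚ) + 2) * b g k
            + 4 * (4 * (g : ℚ) + 2 * (k : ℚ) - 1) * b g (k - 1))) :
    ∀ g : ℕ, 1 ≤ g →
      b g 0 =
        ((Nat.factorial (4 * g) : ℕ) : ℚ) /
          ((8 ^ g * Nat.factorial g * Nat.doubleFactorial (2 * g + 1) : ℕ) : ℚ) := by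
  intro g hg
  induction g, hg using Nat.le_induction with
  | base => norm_num [hb1, Nat.factorial, Nat.doubleFactorial]
  | succ g hg ih =>
    have hz : b g (-1 : ℤ) = 0 := hb0 g hg (-1) (Or.inl (by norm_num))
    have hr := hrec g hg 0
    rw [show ((0:ℤ) - 1) = (-1:ℤ) from by ring, hz] at hr
    push_cast at hr
    have h6 : (4 * (g : ℚ) + 6) ≠ 0 := by positivity
    have hb : b (g + 1) 0 =
        (4 * (g : ℚ) + 1) * (4 * (g : ℚ) + 3) * (4 * (g : ℚ) + 2) * b g 0 /
          (4 * (g : ℚ) + 6) := by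
      field_simp
      linarith [hr]
    rw [hb, ih]
    -- factorial and double factorial identities
    have hfac : Nat.factorial (4 * (g + 1)) =
        (4 * g + 4) * ((4 * g + 3) * ((4 * g + 2) * ((4 * g + 1) * Nat.factorial (4 * g)))) := by
      have : 4 * (g + 1) = (4 * g + 3) + 1 := by ring
      rw [this]
      rw [Nat.factorial_succ, Nat.factorial_succ, Nat.factorial_succ, Nat.factorial_succ]
    have hdf : Nat.doubleFactorial (2 * (g + 1) + 1) =
        (2 * g + 3) * Nat.doubleFactorial (2 * g + 1) := by
      have : 2 * (g + 1) + 1 = (2 * g + 1) + 2 := by ring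
      rw [this, Nat.doubleFactorial_add_two]
    have hfacg : Nat.factorial (g + 1) = (g + 1) * Nat.factorial g := Nat.factorial_succ g
    have hd1 : ((8 ^ g * Nat.factorial g * Nat.doubleFactorial (2 * g + 1) : ℕ) : ℚ) ≠ 0 := by
      push_cast
      positivity
    have hd2 : ((8 ^ (g+1) * Nat.factorial (g+1) * Nat.doubleFactorial (2 * (g+1) + 1) : ℕ) : ℚ) ≠ 0 := by
      push_cast
      positivity
    rw [hfac, hdf, hfacg]
    push_cast
    push_cast at hd1 hd2 ⊢
    field_simp
    ring
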